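/- arXiv:1603.04024 — 6 statements merged into one kernel-verified Lean document; each statement's English description precedes it below -/
import Mathlib

section
/- For all real x with 0 < x < 5, the following double inequality holds: (3 + x²/11)·sinh(x) / (2 + cosh(x) + x²/11) < x < (3 + x²/10)·sinh(x) / (2 + cosh(x) + x²/10). -/
/-!
Put `f_a(x) = (3a + x²) sinh x - x (2a + a cosh x + x²)`; the claim is `f₁₁ < 0 < f₁₀` on `(0, 5)`.
The functions `(p + x²) sinh x + q x cosh x` and `(r + x²) cosh x + s x sinh x` differentiate into
each other, `f_a` vanishes to fourth order at `0`, and `f_a'''' = (12 - a + x²) sinh x + (8 - a) x cosh x`.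
For `a = 10` one more derivative is `x² cosh x > 0`, so `f₁₀ > 0` on `(0, ∞)`.
For `a = 11` four more derivatives reach a positive function. Every function of the chain is `≤ 0`
at `0`, so by monotonicity each changes sign at most once on `(0, ∞)`, from negative to positive;
hence `f₁₁ < 0` on `(0, 5)` because `f₁₁(5) = (3e⁵ - 113e⁻⁵)/2 - 235 < 0`.
-/

open Real Set

/-- On `(0, ∞)`, `g` changes sign at most once, from negative to positive. -/
def NegThenPos (g : ℝ → ℝ) : Prop :=
  ∀ x y, 0 < x → x < y → g y ≤ 0 → g x < 0

theorem NegThenPos.of_pos {g : ℝ → ℝ} (h : ∀ x, 0 < x → 0 < g x) : NegThenPos g :=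
  fun _ y _ hxy hy => absurd hy (h y (by linarith)).not_ge

theorem NegThenPos.of_hasDerivAt {g g' : ℝ → ℝ} (h' : NegThenPos g')
    (hg : ∀ x, HasDerivAt g (g' x) x) (h0 : g 0 ≤ 0) : NegThenPos g := by
  have hcont : Continuous g := continuous_iff_continuousAt.2 fun x => (hg x).continuousAt
  intro x y hx hxy hy
  by_cases hgx : g' x ≤ 0
  · have hanti : StrictAntiOn g (Icc 0 x) :=
      strictAntiOn_of_hasDerivWithinAt_neg (convex_Icc 0 x) hcont.continuousOn
        (fun z _ => (hg z).hasDerivWithinAt)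
        (fun z hz => by rw [interior_Icc] at hz; exact h' z x hz.1 hz.2 hgx)
    exact (hanti ⟨le_rfl, hx.le⟩ ⟨hx.le, le_rfl⟩ hx).trans_le h0
  · have hmono : StrictMonoOn g (Icc x y) :=
      strictMonoOn_of_hasDerivWithinAt_pos (convex_Icc x y) hcont.continuousOn
        (fun z _ => (hg z).hasDerivWithinAt)
        (fun z hz => by
          rw [interior_Icc] at hz
          by_contra hz'
          exact hgx (h' x z hx hz.1 (not_lt.1 hz')).le)
    exact (hmono ⟨le_rfl, hxy.le⟩ ⟨hxy.le, le_rfl⟩ hxy).trans_le hy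

theorem pos_of_hasDerivAt {g g' : ℝ → ℝ} (hg : ∀ x, HasDerivAt g (g' x) x) (h0 : 0 ≤ g 0)
    (h' : ∀ x, 0 < x → 0 < g' x) : ∀ x, 0 < x → 0 < g x := by
  have hmono : StrictMonoOn g (Ici 0) :=
    strictMonoOn_of_hasDerivWithinAt_pos (convex_Ici 0)
      (continuous_iff_continuousAt.2 fun x => (hg x).continuousAt).continuousOn
      (fun z _ => (hg z).hasDerivWithinAt)
      (fun z hz => h' z (by rwa [interior_Ici] at hz))
  exact fun x hx => h0.trans_lt (hmono self_mem_Ici hx.le hx)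

noncomputable def sinhPoly (p q x : ℝ) : ℝ := (p + x ^ 2) * sinh x + q * x * cosh x

noncomputable def coshPoly (r s x : ℝ) : ℝ := (r + x ^ 2) * cosh x + s * x * sinh x

section HyperbolicPoly

variable {p q r s : ℝ}

@[simp] theorem sinhPoly_zero (p q : ℝ) : sinhPoly p q 0 = 0 := by simp [sinhPoly]

@[simp] theorem coshPoly_zero (r s : ℝ) : coshPoly r s 0 = r := by simp [coshPoly]

theorem hasDerivAt_sinhPoly (hr : p + q = r) (hs : q + 2 = s) (x : ℝ) :
    HasDerivAt (sinhPoly p q) (coshPoly r s x) x := by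
  refine ((((hasDerivAt_pow 2 x).const_add p).mul (hasDerivAt_sinh x)).add
    (((hasDerivAt_id x).const_mul q).mul (hasDerivAt_cosh x))).congr_deriv ?_
  simp only [coshPoly, ← hr, ← hs, id]
  ring

theorem hasDerivAt_coshPoly (hp : r + s = p) (hq : s + 2 = q) (x : ℝ) :
    HasDerivAt (coshPoly r s) (sinhPoly p q x) x := by
  refine ((((hasDerivAt_pow 2 x).const_add r).mul (hasDerivAt_cosh x)).add
    (((hasDerivAt_id x).const_mul s).mul (hasDerivAt_sinh x))).congr_deriv ?_
  simp only [sinhPoly, ← hp, ← hq, id]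
  ring

theorem sinhPoly_pos (hp : 0 ≤ p) (hq : 0 ≤ q) {x : ℝ} (hx : 0 < x) : 0 < sinhPoly p q x := by
  have := sinh_pos_iff.2 hx
  have := cosh_pos x
  unfold sinhPoly
  positivity

theorem coshPoly_pos (hr : 0 ≤ r) (hs : 0 ≤ s) {x : ℝ} (hx : 0 < x) : 0 < coshPoly r s x := by
  have := sinh_pos_iff.2 hx
  have := cosh_pos x
  unfold coshPoly
  positivity

end HyperbolicPoly

noncomputable def frameGap (a x : ℝ) : ℝ :=
  (3 * a + x ^ 2) * sinh x - x * (2 * a + a * cosh x + x ^ 2)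

section FrameGap

variable (a : ℝ)

theorem hasDerivAt_frameGap (x : ℝ) :
    HasDerivAt (frameGap a) (coshPoly (2 * a) (2 - a) x - (2 * a + 3 * x ^ 2)) x := by
  have h : frameGap a = fun x => sinhPoly (3 * a) (-a) x - (2 * a * x + x ^ 3) := by
    funext x
    simp only [frameGap, sinhPoly]
    ring
  rw [h]
  refine ((hasDerivAt_sinhPoly (r := 2 * a) (s := 2 - a) (by ring) (by ring) x).sub
    (((hasDerivAt_id x).const_mul (2 * a)).add (hasDerivAt_pow 3 x))).congr_deriv ?_
  norm_num

theorem hasDerivAt_frameGap_deriv (x : ℝ) :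
    HasDerivAt (fun x => coshPoly (2 * a) (2 - a) x - (2 * a + 3 * x ^ 2))
      (sinhPoly (a + 2) (4 - a) x - 6 * x) x := by
  refine ((hasDerivAt_coshPoly (p := a + 2) (q := 4 - a) (by ring) (by ring) x).sub
    (((hasDerivAt_pow 2 x).const_mul 3).const_add (2 * a))).congr_deriv ?_
  ring

theorem hasDerivAt_frameGap_deriv2 (x : ℝ) :
    HasDerivAt (fun x => sinhPoly (a + 2) (4 - a) x - 6 * x) (coshPoly 6 (6 - a) x - 6) x := by
  refine ((hasDerivAt_sinhPoly (r := 6) (s := 6 - a) (by ring) (by ring) x).sub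
    ((hasDerivAt_id x).const_mul 6)).congr_deriv ?_
  simp

theorem hasDerivAt_frameGap_deriv3 (x : ℝ) :
    HasDerivAt (fun x => coshPoly 6 (6 - a) x - 6) (sinhPoly (12 - a) (8 - a) x) x :=
  (hasDerivAt_coshPoly (by ring) (by ring) x).sub_const 6

theorem negThenPos_frameGap (h : NegThenPos (sinhPoly (12 - a) (8 - a))) :
    NegThenPos (frameGap a) :=
  ((((h.of_hasDerivAt (hasDerivAt_frameGap_deriv3 a) (by simp)).of_hasDerivAt
    (hasDerivAt_frameGap_deriv2 a) (by simp)).of_hasDerivAt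
    (hasDerivAt_frameGap_deriv a) (by simp)).of_hasDerivAt
    (hasDerivAt_frameGap a) (by simp [frameGap]))

theorem frameGap_pos (h : ∀ x, 0 < x → 0 < sinhPoly (12 - a) (8 - a) x) :
    ∀ x, 0 < x → 0 < frameGap a x :=
  pos_of_hasDerivAt (hasDerivAt_frameGap a) (by simp [frameGap]) <|
    pos_of_hasDerivAt (hasDerivAt_frameGap_deriv a) (by simp) <|
    pos_of_hasDerivAt (hasDerivAt_frameGap_deriv2 a) (by simp) <|
    pos_of_hasDerivAt (hasDerivAt_frameGap_deriv3 a) (by simp) h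

end FrameGap

theorem frameGap_ten_pos {x : ℝ} (hx : 0 < x) : 0 < frameGap 10 x :=
  frameGap_pos 10 (pos_of_hasDerivAt (hasDerivAt_sinhPoly (r := 0) (s := 0) (by norm_num)
    (by norm_num)) (by simp) fun _ => coshPoly_pos le_rfl le_rfl) x hx

theorem negThenPos_sinhPoly_one_neg_three : NegThenPos (sinhPoly 1 (-3)) := by
  have h₄ : NegThenPos (sinhPoly 1 5) :=
    NegThenPos.of_pos fun _ => sinhPoly_pos (by norm_num) (by norm_num)
  have h₃ : NegThenPos (coshPoly (-2) 3) :=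
    h₄.of_hasDerivAt (hasDerivAt_coshPoly (by norm_num) (by norm_num)) (by norm_num)
  have h₂ : NegThenPos (sinhPoly (-3) 1) :=
    h₃.of_hasDerivAt (hasDerivAt_sinhPoly (by norm_num) (by norm_num)) (by simp)
  have h₁ : NegThenPos (coshPoly (-2) (-1)) :=
    h₂.of_hasDerivAt (hasDerivAt_coshPoly (by norm_num) (by norm_num)) (by norm_num)
  exact h₁.of_hasDerivAt (hasDerivAt_sinhPoly (by norm_num) (by norm_num)) (by simp)

theorem exp_five_lt : exp 5 < 149 := by
  rw [show (5 : ℝ) = (5 : ℕ) * 1 by norm_num, exp_nat_mul]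
  calc exp 1 ^ 5 < 2.7182818286 ^ 5 := by gcongr; exact exp_one_lt_d9
    _ < 149 := by norm_num

theorem frameGap_eleven_neg {x : ℝ} (hx0 : 0 < x) (hx5 : x < 5) : frameGap 11 x < 0 := by
  have h5 : frameGap 11 5 < 0 := by
    have := exp_five_lt
    have := exp_pos (-5)
    rw [frameGap, sinh_eq, cosh_eq]
    linarith
  exact negThenPos_frameGap 11 (by norm_num [negThenPos_sinhPoly_one_neg_three]) x 5 hx0 hx5 h5.le

theorem frame_inequality (x : ℝ) (hx0 : 0 < x) (hx5 : x < 5) :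
    (3 + x^2/11) * Real.sinh x / (2 + Real.cosh x + x^2/11) < x ∧
    x < (3 + x^2/10) * Real.sinh x / (2 + Real.cosh x + x^2/10) := by
  have hlow := frameGap_eleven_neg hx0 hx5
  have hup := frameGap_ten_pos hx0
  have := cosh_pos x
  unfold frameGap at hlow hup
  constructor
  · rw [div_lt_iff₀ (by positivity)]
    linarith
  · rw [lt_div_iff₀ (by positivity)]
    linarith
end

section
/- For all real x > 0, one has 3·sinh(x)/(2 + cosh(x)) < x < (3 + x²/10)·sinh(x)/(2 + cosh(x) + x²/10). -/
/-!
After clearing the (positive) denominators, each inequality says that a combination `g` of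
`x`, `sinh x` and `cosh x` with polynomial coefficients is positive for `x > 0`. Such a `g`
vanishes at `0` and its derivative is again a combination of the same kind, so positivity of
`g` follows from positivity of `g'`. Differentiating three times (left inequality) or five times
(right inequality) reaches the manifestly positive `x sinh x`, respectively `x² cosh x`.
-/

open Real Set

theorem pos_of_deriv_pos {f : ℝ → ℝ} (hf : ContinuousOn f (Ici 0)) (h0 : f 0 = 0)
    (hf' : ∀ y, 0 < y → 0 < deriv f y) {x : ℝ} (hx : 0 < x) : 0 < f x := by
  have hmono : StrictMonoOn f (Ici 0) :=
    strictMonoOn_of_deriv_pos (convex_Ici 0) hf fun y hy => hf' y (by simpa using hy)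
  simpa [h0] using hmono self_mem_Ici hx.le hx

theorem sinh_lt_mul_cosh {x : ℝ} (hx : 0 < x) : sinh x < x * cosh x :=
  sub_pos.mp <| pos_of_deriv_pos (f := fun y => y * cosh y - sinh y) (by fun_prop) (by simp)
    (fun y hy => by simpa using mul_pos hy (sinh_pos_iff.mpr hy)) hx

theorem two_mul_cosh_sub_one_lt_mul_sinh {x : ℝ} (hx : 0 < x) :
    2 * (cosh x - 1) < x * sinh x :=
  sub_pos.mp <| pos_of_deriv_pos (f := fun y => y * sinh y - 2 * (cosh y - 1)) (by fun_prop)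
    (by simp) (fun y hy => by simp (disch := fun_prop); linarith [sinh_lt_mul_cosh hy]) hx

theorem three_mul_sinh_lt_mul_two_add_cosh {x : ℝ} (hx : 0 < x) :
    3 * sinh x < x * (2 + cosh x) :=
  sub_pos.mp <| pos_of_deriv_pos (f := fun y => y * (2 + cosh y) - 3 * sinh y) (by fun_prop)
    (by simp)
    (fun y hy => by simp (disch := fun_prop); linarith [two_mul_cosh_sub_one_lt_mul_sinh hy]) hx

theorem two_mul_mul_cosh_lt_sq_add_two_mul_sinh {x : ℝ} (hx : 0 < x) :
    2 * x * cosh x < (x ^ 2 + 2) * sinh x :=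
  sub_pos.mp <| pos_of_deriv_pos (f := fun y => (y ^ 2 + 2) * sinh y - 2 * y * cosh y)
    (by fun_prop) (by simp)
    (fun y hy => by simp (disch := fun_prop); nlinarith [cosh_pos y, pow_pos hy 2]) hx

theorem four_mul_mul_sinh_add_six_lt_sq_add_six_mul_cosh {x : ℝ} (hx : 0 < x) :
    4 * x * sinh x + 6 < (x ^ 2 + 6) * cosh x :=
  sub_pos.mp <| pos_of_deriv_pos (f := fun y => (y ^ 2 + 6) * cosh y - (4 * y * sinh y + 6))
    (by fun_prop) (by simp)
    (fun y hy => by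
      simp (disch := fun_prop); linarith [two_mul_mul_cosh_lt_sq_add_two_mul_sinh hy]) hx

theorem six_mul_mul_cosh_add_one_lt_sq_add_twelve_mul_sinh {x : ℝ} (hx : 0 < x) :
    6 * x * (cosh x + 1) < (x ^ 2 + 12) * sinh x :=
  sub_pos.mp <| pos_of_deriv_pos (f := fun y => (y ^ 2 + 12) * sinh y - 6 * y * (cosh y + 1))
    (by fun_prop) (by simp)
    (fun y hy => by
      simp (disch := fun_prop); linarith [four_mul_mul_sinh_add_six_lt_sq_add_six_mul_cosh hy])
    hx

theorem eight_mul_mul_sinh_add_three_mul_sq_add_twenty_lt_sq_add_twenty_mul_cosh {x : ℝ}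
    (hx : 0 < x) : 8 * x * sinh x + 3 * x ^ 2 + 20 < (x ^ 2 + 20) * cosh x :=
  sub_pos.mp <| pos_of_deriv_pos
    (f := fun y => (y ^ 2 + 20) * cosh y - (8 * y * sinh y + 3 * y ^ 2 + 20))
    (by fun_prop) (by simp)
    (fun y hy => by
      simp (disch := fun_prop)
      linarith [six_mul_mul_cosh_add_one_lt_sq_add_twelve_mul_sinh hy]) hx

theorem mul_sq_add_ten_mul_cosh_add_twenty_lt_sq_add_thirty_mul_sinh {x : ℝ} (hx : 0 < x) :
    x * (x ^ 2 + 10 * cosh x + 20) < (x ^ 2 + 30) * sinh x :=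
  sub_pos.mp <| pos_of_deriv_pos
    (f := fun y => (y ^ 2 + 30) * sinh y - y * (y ^ 2 + 10 * cosh y + 20))
    (by fun_prop) (by simp)
    (fun y hy => by
      simp (disch := fun_prop)
      linarith [eight_mul_mul_sinh_add_three_mul_sq_add_twenty_lt_sq_add_twenty_mul_cosh hy])
    hx

theorem chen_sandor_inequality (x : ℝ) (hx : 0 < x) :
    3 * Real.sinh x / (2 + Real.cosh x) < x ∧
    x < (3 + x^2/10) * Real.sinh x / (2 + Real.cosh x + x^2/10) := by
  constructor
  · rw [div_lt_iff₀ (by positivity)]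
    linarith [three_mul_sinh_lt_mul_two_add_cosh hx]
  · rw [lt_div_iff₀ (by positivity)]
    linarith [mul_sq_add_ten_mul_cosh_add_twenty_lt_sq_add_thirty_mul_sinh hx]
end

section
/- For all real x with 0 < x < π/2, one has (3 − x²/10)·sin(x)/(2 + cos(x) + x²/10) < x. -/
/-!
The inequality is a weakening of the Cusa–Huygens inequality `3 sin x < x (2 + cos x)` for
`x > 0`: the extra terms add `x³/10` on the right and subtract `x² sin x / 10 ≥ -x³/10` on the
left. Cusa–Huygens holds because `x (2 + cos x) - 3 sin x` vanishes at `0` and has derivative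
`2 - 2 cos x - x sin x = 4 sin (x/2) (sin (x/2) - (x/2) cos (x/2))`, positive on `(0, π)` by
`tan y > y`; beyond `π` the right side already exceeds `3`.
-/

open Real Set

namespace Real

lemma mul_cos_lt_sin {x : ℝ} (hx0 : 0 < x) (hx : x < π / 2) : x * cos x < sin x := by
  have hcos : 0 < cos x := cos_pos_of_mem_Ioo ⟨by linarith, hx⟩
  have htan := lt_tan hx0 hx
  rwa [tan_eq_sin_div_cos, lt_div_iff₀ hcos] at htan

lemma two_sub_two_mul_cos_sub_mul_sin_pos {x : ℝ} (hx0 : 0 < x) (hx : x < π) :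
    0 < 2 - 2 * cos x - x * sin x := by
  set y := x / 2
  have hxy : x = 2 * y := by ring
  have hsin : 0 < sin y := sin_pos_of_pos_of_lt_pi (by positivity) (by linarith)
  have hgap : y * cos y < sin y := mul_cos_lt_sin (by positivity) (by linarith)
  have hexpand : 2 - 2 * cos x - x * sin x = 4 * sin y * (sin y - y * cos y) := by
    rw [hxy, sin_two_mul, cos_two_mul, cos_sq']
    ring
  rw [hexpand]
  exact mul_pos (by positivity) (by linarith)

lemma hasDerivAt_mul_two_add_cos_sub_three_mul_sin (x : ℝ) :
    HasDerivAt (fun x ↦ x * (2 + cos x) - 3 * sin x) (2 - 2 * cos x - x * sin x) x := by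
  refine (((hasDerivAt_id' x).mul ((hasDerivAt_cos x).const_add 2)).sub
    ((hasDerivAt_sin x).const_mul 3)).congr_deriv ?_
  ring

lemma strictMonoOn_mul_two_add_cos_sub_three_mul_sin :
    StrictMonoOn (fun x ↦ x * (2 + cos x) - 3 * sin x) (Icc 0 π) := by
  refine strictMonoOn_of_deriv_pos (convex_Icc 0 π) (by fun_prop) fun x hx ↦ ?_
  rw [interior_Icc] at hx
  rw [(hasDerivAt_mul_two_add_cos_sub_three_mul_sin x).deriv]
  exact two_sub_two_mul_cos_sub_mul_sin_pos hx.1 hx.2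

theorem three_mul_sin_lt_mul_two_add_cos {x : ℝ} (hx0 : 0 < x) : 3 * sin x < x * (2 + cos x) := by
  rcases le_or_gt x π with hxπ | hπx
  · have hmono := strictMonoOn_mul_two_add_cos_sub_three_mul_sin
      ⟨le_rfl, pi_pos.le⟩ ⟨hx0.le, hxπ⟩ hx0
    simp only [sin_zero, mul_zero, zero_mul, sub_zero] at hmono
    linarith
  · nlinarith [sin_le_one x, neg_one_le_cos x, pi_gt_three]

end Real

theorem trig_frame_lower_general (x : ℝ) (hx0 : 0 < x) :
    (3 - x^2/10) * Real.sin x / (2 + Real.cos x + x^2/10) < x := by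
  have hden : 0 < 2 + cos x + x ^ 2 / 10 := by nlinarith [neg_one_le_cos x, sq_nonneg x]
  have hcusa := three_mul_sin_lt_mul_two_add_cos hx0
  have hsin : -x ≤ sin x := (abs_le.mp (abs_sin_le_abs.trans_eq (abs_of_pos hx0))).1
  rw [div_lt_iff₀ hden]
  nlinarith [mul_le_mul_of_nonneg_left hsin (sq_nonneg x)]

theorem trig_frame_lower (x : ℝ) (hx0 : 0 < x) (hx : x < Real.pi / 2) :
    (3 - x^2/10) * Real.sin x / (2 + Real.cos x + x^2/10) < x :=
  trig_frame_lower_general x hx0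
end

section
/- For every real x > 0, the function G(x) = (1/(p+1) + 𝓘_p(x) − ((p+2)/(p+1))·𝓘_{p+1}(x)) / (x²·(𝓘_{p+1}(x) − 1)) is strictly decreasing on (0, ∞), for each fixed p with −1 < p ≤ 0. -/
open Real

noncomputable def besselJn (p x : ℝ) : ℝ :=
  ∑' n : ℕ, (-(1:ℝ)/4)^n * x^(2*n) / ((Real.Gamma (p+n+1) / Real.Gamma (p+1)) * n.factorial)

noncomputable def besselIn (p x : ℝ) : ℝ :=
  ∑' n : ℕ, ((1:ℝ)/4)^n * x^(2*n) / ((Real.Gamma (p+n+1) / Real.Gamma (p+1)) * n.factorial)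

noncomputable def besselJ (p x : ℝ) : ℝ :=
  ∑' n : ℕ, (-1:ℝ)^n * (x/2)^(p+2*n) / (n.factorial * Real.Gamma (p+n+1))

/-!
Put `t = x² / 4` and let `β n` be the coefficients of `𝓘_{p+1}` as a power series in `t`.
Since `(p + 1) 𝓘_p - (p + 2) 𝓘_{p+1} = ∑ (n - 1) β n tⁿ`, whose first two terms are `-1` and `0`,
both numerator and denominator of `G` are, up to positive constants, `t²` times power series
in `t` with coefficients `c n β (n + 1)` and `β (n + 1)`, where `c n = (n + 1) / ((n + 2) (p + n + 3))` is decreasing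
exactly when `p ≤ 0`. A quotient `∑ cₙ bₙ tⁿ / ∑ bₙ tⁿ` with `b > 0` and `c` decreasing is
decreasing: symmetrising the double series of `(∑ cₙ bₙ sⁿ)(∑ bₙ tⁿ) - (∑ cₙ bₙ tⁿ)(∑ bₙ sⁿ)`
gives the terms `(c m - c k) b m b k (sᵐ tᵏ - sᵏ tᵐ) ≥ 0` for `s < t`.
-/

open Set Nat

lemma pow_mul_pow_lt_pow_mul_pow {s t : ℝ} (hs : 0 < s) (hst : s < t) {m k : ℕ} (hmk : m < k) :
    s ^ k * t ^ m < s ^ m * t ^ k := by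
  obtain ⟨d, rfl⟩ := Nat.exists_eq_add_of_lt hmk
  have ht := hs.trans hst
  have hd : s ^ (d + 1) < t ^ (d + 1) := pow_lt_pow_left₀ hst hs.le d.succ_ne_zero
  calc s ^ (m + d + 1) * t ^ m = s ^ m * t ^ m * s ^ (d + 1) := by ring
    _ < s ^ m * t ^ m * t ^ (d + 1) := by gcongr
    _ = s ^ m * t ^ (m + d + 1) := by ring

lemma pow_mul_pow_le_pow_mul_pow {s t : ℝ} (hs : 0 ≤ s) (hst : s ≤ t) {m k : ℕ}
    (hmk : m ≤ k) :
    s ^ k * t ^ m ≤ s ^ m * t ^ k := by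
  obtain ⟨d, rfl⟩ := Nat.exists_eq_add_of_le hmk
  have ht := hs.trans hst
  calc s ^ (m + d) * t ^ m = s ^ m * t ^ m * s ^ d := by ring
    _ ≤ s ^ m * t ^ m * t ^ d := by gcongr
    _ = s ^ m * t ^ (m + d) := by ring

lemma mul_sub_pow_mul_pow_nonneg_of_antitone {b c : ℕ → ℝ} (hb : ∀ n, 0 ≤ b n)
    (hc : Antitone c) {s t : ℝ} (hs : 0 ≤ s) (hst : s ≤ t) (m k : ℕ) :
    0 ≤ (c m - c k) * (b m * b k) * (s ^ m * t ^ k - s ^ k * t ^ m) := by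
  have hbb := mul_nonneg (hb m) (hb k)
  rcases le_total m k with h | h
  · exact mul_nonneg (mul_nonneg (sub_nonneg.2 (hc h)) hbb)
      (sub_nonneg.2 (pow_mul_pow_le_pow_mul_pow hs hst h))
  · exact mul_nonneg_of_nonpos_of_nonpos (mul_nonpos_of_nonpos_of_nonneg (sub_nonpos.2 (hc h)) hbb)
      (sub_nonpos.2 (pow_mul_pow_le_pow_mul_pow hs hst h))

theorem tsum_mul_tsum_lt_of_antitone {b c : ℕ → ℝ} (hb : ∀ n, 0 ≤ b n) (hc : Antitone c)
    {i j : ℕ} (hij : i < j) (hcij : c j < c i) (hbi : 0 < b i) (hbj : 0 < b j)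
    {s t : ℝ} (hs : 0 < s) (hst : s < t)
    (hbs : Summable fun n => b n * s ^ n) (hbt : Summable fun n => b n * t ^ n)
    (hcs : Summable fun n => c n * b n * s ^ n) (hct : Summable fun n => c n * b n * t ^ n) :
    (∑' n, c n * b n * t ^ n) * (∑' n, b n * s ^ n) <
      (∑' n, c n * b n * s ^ n) * (∑' n, b n * t ^ n) := by
  set D : ℕ × ℕ → ℝ := fun z =>
    c z.1 * b z.1 * s ^ z.1 * (b z.2 * t ^ z.2) - c z.1 * b z.1 * t ^ z.1 * (b z.2 * s ^ z.2)
  have hF := summable_mul_of_summable_norm hcs.norm hbt.norm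
  have hF' := summable_mul_of_summable_norm hct.norm hbs.norm
  have hD : Summable D := hF.sub hF'
  have hDswap : Summable fun z : ℕ × ℕ => D z.swap := hD.prod_symm
  have hsymm : ∑' z : ℕ × ℕ, D z.swap = ∑' z, D z := (Equiv.prodComm ℕ ℕ).tsum_eq D
  have hpair : ∀ z : ℕ × ℕ, D z + D z.swap =
      (c z.1 - c z.2) * (b z.1 * b z.2) * (s ^ z.1 * t ^ z.2 - s ^ z.2 * t ^ z.1) := by
    intro z; simp only [D, Prod.fst_swap, Prod.snd_swap]; ring
  have hpos : 0 < ∑' z : ℕ × ℕ, (D z + D z.swap) := by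
    refine (hD.add hDswap).tsum_pos (fun z => ?_) (i, j) ?_ <;> rw [hpair]
    · exact mul_sub_pow_mul_pow_nonneg_of_antitone hb hc hs.le hst.le _ _
    · exact mul_pos (mul_pos (sub_pos.2 hcij) (mul_pos hbi hbj))
        (sub_pos.2 (pow_mul_pow_lt_pow_mul_pow hs hst hij))
  rw [hD.tsum_add hDswap, hsymm] at hpos
  rw [← sub_pos, tsum_mul_tsum_of_summable_norm hcs.norm hbt.norm,
    tsum_mul_tsum_of_summable_norm hct.norm hbs.norm, ← hF.tsum_sub hF']
  linarith

theorem strictAntiOn_tsum_mul_div_tsum {b c : ℕ → ℝ} (hb : ∀ n, 0 < b n) (hc : Antitone c)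
    (hc0 : ∀ n, 0 ≤ c n) {i j : ℕ} (hij : i < j) (hcij : c j < c i)
    (hsum : ∀ r > 0, Summable fun n => b n * r ^ n) :
    StrictAntiOn (fun r => (∑' n, c n * b n * r ^ n) / ∑' n, b n * r ^ n) (Ioi 0) := by
  have hcsum : ∀ r > 0, Summable fun n => c n * b n * r ^ n := fun r hr =>
    ((hsum r hr).mul_left (c 0)).of_nonneg_of_le
      (fun n => by have := hb n; have := hc0 n; positivity)
      (fun n => by simpa only [mul_assoc] using
        mul_le_mul_of_nonneg_right (hc n.zero_le) (mul_pos (hb n) (pow_pos hr n)).le)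
  have hpos : ∀ r > 0, 0 < ∑' n, b n * r ^ n := fun r hr =>
    (hsum r hr).tsum_pos (fun n => (mul_pos (hb n) (pow_pos hr n)).le) 0 (by simpa using hb 0)
  intro s hs t ht hst
  rw [div_lt_div_iff₀ (hpos t ht) (hpos s hs)]
  exact tsum_mul_tsum_lt_of_antitone (fun n => (hb n).le) hc hij hcij (hb i) (hb j) hs hst
    (hsum s hs) (hsum t ht) (hcsum s hs) (hcsum t ht)

noncomputable def besselInCoeff (p : ℝ) (n : ℕ) : ℝ :=
  (Gamma (p + n + 1) / Gamma (p + 1) * n !)⁻¹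

theorem besselIn_eq_tsum (p x : ℝ) :
    besselIn p x = ∑' n, besselInCoeff p n * (x ^ 2 / 4) ^ n := by
  refine tsum_congr fun n => ?_
  rw [besselInCoeff, pow_mul]
  ring

lemma add_natCast_add_one_pos {p : ℝ} (hp : -1 < p) (n : ℕ) : 0 < p + n + 1 := by
  have := n.cast_nonneg (α := ℝ)
  linarith

section Coeff

variable {p : ℝ} (hp : -1 < p)
include hp

theorem besselInCoeff_zero : besselInCoeff p 0 = 1 := by
  have : Gamma (p + 1) ≠ 0 := (Gamma_pos_of_pos (by linarith)).ne'
  simp [besselInCoeff, this]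

theorem besselInCoeff_succ (n : ℕ) :
    besselInCoeff p (n + 1) = besselInCoeff p n / ((p + n + 1) * (n + 1)) := by
  have h : p + (n + 1 : ℕ) + 1 = (p + n + 1) + 1 := by push_cast; ring
  rw [besselInCoeff, besselInCoeff, h, Gamma_add_one (add_natCast_add_one_pos hp n).ne',
    factorial_succ]
  push_cast
  field_simp

theorem besselInCoeff_pos (n : ℕ) : 0 < besselInCoeff p n := by
  have := Gamma_pos_of_pos (add_natCast_add_one_pos hp n)
  have := Gamma_pos_of_pos (show 0 < p + 1 by linarith)
  unfold besselInCoeff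
  positivity

theorem besselInCoeff_eq_mul_besselInCoeff_add_one (n : ℕ) :
    besselInCoeff p n = (p + n + 1) / (p + 1) * besselInCoeff (p + 1) n := by
  have hp1 : p + 1 ≠ 0 := by linarith
  have hΓ := (Gamma_pos_of_pos (show 0 < p + 1 by linarith)).ne'
  have h1 : Gamma (p + 1 + n + 1) = (p + n + 1) * Gamma (p + n + 1) := by
    rw [show p + 1 + n + 1 = (p + n + 1) + 1 by ring,
      Gamma_add_one (add_natCast_add_one_pos hp n).ne']
  have := (add_natCast_add_one_pos hp n).ne'
  rw [besselInCoeff, besselInCoeff, h1, Gamma_add_one hp1]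
  field_simp

theorem besselInCoeff_succ_le (n : ℕ) : besselInCoeff p (n + 1) ≤ (p + 1)⁻¹ / n ! := by
  induction n with
  | zero => simp [besselInCoeff_succ hp, besselInCoeff_zero hp]
  | succ n ih =>
    have hn : (n + 1 : ℝ) ≤ (p + (n + 1 : ℕ) + 1) * ((n + 1 : ℕ) + 1) := by
      push_cast
      nlinarith
    calc besselInCoeff p (n + 1 + 1)
        ≤ besselInCoeff p (n + 1) / (n + 1) := by
          rw [besselInCoeff_succ hp]
          exact div_le_div_of_nonneg_left (besselInCoeff_pos hp _).le (by positivity) hn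
      _ ≤ (p + 1)⁻¹ / n ! / (n + 1) := by gcongr
      _ = (p + 1)⁻¹ / (n + 1)! := by
          rw [factorial_succ, Nat.cast_mul, div_div, mul_comm]
          push_cast
          ring

theorem summable_besselInCoeff_succ_mul_pow (r : ℝ) :
    Summable fun n => besselInCoeff p (n + 1) * r ^ n := by
  refine .of_norm_bounded ((Real.summable_pow_div_factorial |r|).mul_left (p + 1)⁻¹) fun n => ?_
  rw [norm_mul, norm_pow, Real.norm_eq_abs, Real.norm_eq_abs, abs_of_pos (besselInCoeff_pos hp _)]
  exact (mul_le_mul_of_nonneg_right (besselInCoeff_succ_le hp n) (by positivity)).trans_eq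
    (by ring)

theorem summable_besselInCoeff_mul_pow (r : ℝ) : Summable fun n => besselInCoeff p n * r ^ n :=
  (summable_nat_add_iff 1).1 <|
    ((summable_besselInCoeff_succ_mul_pow hp r).mul_left r).congr fun n => by ring

end Coeff

noncomputable def besselInRatioCoeff (p : ℝ) (n : ℕ) : ℝ := (n + 1) / ((n + 2) * (p + n + 3))

section RatioCoeff

variable {p : ℝ} (hp1 : -1 < p)
include hp1

theorem besselInRatioCoeff_nonneg (n : ℕ) : 0 ≤ besselInRatioCoeff p n := by
  have := add_natCast_add_one_pos hp1 n
  exact div_nonneg (by positivity) (mul_nonneg (by positivity) (by linarith))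

theorem besselInRatioCoeff_two_lt_one (hp2 : p < 4) :
    besselInRatioCoeff p 2 < besselInRatioCoeff p 1 := by
  rw [besselInRatioCoeff, besselInRatioCoeff, div_lt_div_iff₀ (by norm_num; linarith)
    (by norm_num; linarith)]
  norm_num
  linarith

theorem antitone_besselInRatioCoeff (hp2 : p ≤ 0) : Antitone (besselInRatioCoeff p) := by
  refine antitone_nat_of_succ_le fun n => ?_
  have hn := n.cast_nonneg (α := ℝ)
  rw [besselInRatioCoeff, besselInRatioCoeff]
  push_cast
  rw [div_le_div_iff₀ (by nlinarith) (by nlinarith)]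
  nlinarith

end RatioCoeff

theorem besselIn_sub_one {q : ℝ} (hq : -1 < q) (x : ℝ) :
    besselIn q x - 1 = x ^ 2 / 4 * ∑' n, besselInCoeff q (n + 1) * (x ^ 2 / 4) ^ n := by
  rw [besselIn_eq_tsum, (summable_besselInCoeff_mul_pow hq _).tsum_eq_zero_add,
    besselInCoeff_zero hq, ← tsum_mul_left]
  simp only [pow_zero, mul_one, add_sub_cancel_left, pow_succ]
  exact tsum_congr fun n => by ring

theorem one_add_besselIn_sub_besselIn {p : ℝ} (hp : -1 < p) (x : ℝ) :
    1 + (p + 1) * besselIn p x - (p + 2) * besselIn (p + 1) x =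
      (x ^ 2 / 4) ^ 2 *
        ∑' n, besselInRatioCoeff p n * besselInCoeff (p + 1) (n + 1) * (x ^ 2 / 4) ^ n := by
  set t := x ^ 2 / 4
  have hp1 : -1 < p + 1 := by linarith
  have hsum : HasSum (fun n : ℕ => ((n : ℝ) - 1) * (besselInCoeff (p + 1) n * t ^ n))
      ((p + 1) * besselIn p x - (p + 2) * besselIn (p + 1) x) := by
    rw [besselIn_eq_tsum, besselIn_eq_tsum]
    refine (((summable_besselInCoeff_mul_pow hp t).hasSum.mul_left (p + 1)).sub
      ((summable_besselInCoeff_mul_pow hp1 t).hasSum.mul_left (p + 2))).congr_fun fun n => ?_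
    have : p + 1 ≠ 0 := by linarith
    rw [besselInCoeff_eq_mul_besselInCoeff_add_one hp]
    field_simp
    ring
  have hshift := (hasSum_nat_add_iff' 2).2 hsum
  norm_num [Finset.sum_range_succ, besselInCoeff_zero hp1] at hshift
  rw [← tsum_mul_left, add_sub_assoc, add_comm, ← hshift.tsum_eq]
  refine tsum_congr fun n => ?_
  rw [besselInCoeff_succ hp1 (n + 1), besselInRatioCoeff]
  have := add_natCast_add_one_pos hp n
  push_cast
  field_simp
  ring

theorem besselIn_quotient_eq {p : ℝ} (hp1 : -1 < p) {x : ℝ} (hx : x ≠ 0) :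
    (1/(p+1) + besselIn p x - ((p+2)/(p+1)) * besselIn (p+1) x) /
      (x^2 * (besselIn (p+1) x - 1)) =
    (4 * (p + 1))⁻¹ *
      ((∑' n, besselInRatioCoeff p n * besselInCoeff (p + 1) (n + 1) * (x ^ 2 / 4) ^ n) /
        ∑' n, besselInCoeff (p + 1) (n + 1) * (x ^ 2 / 4) ^ n) := by
  have : p + 1 ≠ 0 := by linarith
  rw [show 1/(p+1) + besselIn p x - ((p+2)/(p+1)) * besselIn (p+1) x =
    (1 + (p + 1) * besselIn p x - (p + 2) * besselIn (p + 1) x) / (p + 1) by field_simp,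
    one_add_besselIn_sub_besselIn hp1, besselIn_sub_one (by linarith)]
  generalize ∑' n, besselInRatioCoeff p n * besselInCoeff (p + 1) (n + 1) * (x ^ 2 / 4) ^ n = S
  generalize ∑' n, besselInCoeff (p + 1) (n + 1) * (x ^ 2 / 4) ^ n = T
  field_simp

theorem G_strict_anti (p : ℝ) (hp1 : -1 < p) (hp2 : p ≤ 0) :
    StrictAntiOn (fun x : ℝ =>
      (1/(p+1) + besselIn p x - ((p+2)/(p+1)) * besselIn (p+1) x) /
        (x^2 * (besselIn (p+1) x - 1))) (Set.Ioi (0:ℝ)) := by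
  have hp : -1 < p + 1 := by linarith
  have hR := strictAntiOn_tsum_mul_div_tsum (fun n => besselInCoeff_pos hp (n + 1))
    (antitone_besselInRatioCoeff hp1 hp2) (besselInRatioCoeff_nonneg hp1) one_lt_two
    (besselInRatioCoeff_two_lt_one hp1 (by linarith))
    fun r _ => summable_besselInCoeff_succ_mul_pow hp r
  intro x (hx : 0 < x) y (hy : 0 < y) hxy
  simp only [besselIn_quotient_eq hp1 hx.ne', besselIn_quotient_eq hp1 hy.ne']
  refine mul_lt_mul_of_pos_left (hR ?_ ?_ ?_) (inv_pos.2 (by linarith))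
  · exact (by positivity : (0:ℝ) < x ^ 2 / 4)
  · exact (by positivity : (0:ℝ) < y ^ 2 / 4)
  · gcongr
end

section
/- For all real x ≠ 0, tanh(x)/x + 3·cosh(x)/(2 + cosh(x)) ≥ 2. -/
/-!
With `c = cosh x` and `s = sinh x`, clearing denominators turns the inequality (for `x > 0`) into
`tanhCoshGap x = s (2 + c) + x c² - 4 x c ≥ 0`; the case `x < 0` follows by evenness.
The gap vanishes at `0` together with its first two derivatives, and its third derivative
`10 (2c + 1)(c - 1) + 2 x s (4c - 2)` is visibly nonnegative for `x ≥ 0`, so integrating three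
times gives the claim.
-/

open Real Set

theorem monotoneOn_Ici_of_hasDerivAt_nonneg {f f' : ℝ → ℝ} {a : ℝ}
    (hf : ∀ y, a ≤ y → HasDerivAt f (f' y) y) (hf' : ∀ y, a ≤ y → 0 ≤ f' y) :
    MonotoneOn f (Ici a) := by
  refine monotoneOn_of_deriv_nonneg (convex_Ici a)
    (fun y hy => (hf y hy).continuousAt.continuousWithinAt) ?_ ?_
  · rw [interior_Ici]
    exact fun y hy => (hf y (le_of_lt hy)).differentiableAt.differentiableWithinAt
  · rw [interior_Ici]
    intro y hy
    rw [(hf y (le_of_lt hy)).deriv]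
    exact hf' y (le_of_lt hy)

theorem nonneg_of_hasDerivAt_nonneg {f f' : ℝ → ℝ} (hf : ∀ y, 0 ≤ y → HasDerivAt f (f' y) y)
    (hf' : ∀ y, 0 ≤ y → 0 ≤ f' y) (hf₀ : f 0 = 0) {x : ℝ} (hx : 0 ≤ x) : 0 ≤ f x :=
  hf₀ ▸ monotoneOn_Ici_of_hasDerivAt_nonneg hf hf' self_mem_Ici hx hx

noncomputable def tanhCoshGap (x : ℝ) : ℝ :=
  sinh x * (2 + cosh x) + x * cosh x ^ 2 - 4 * (x * cosh x)

noncomputable def tanhCoshGap' (x : ℝ) : ℝ :=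
  3 * cosh x ^ 2 - 1 - 2 * cosh x + 2 * x * sinh x * (cosh x - 2)

noncomputable def tanhCoshGap'' (x : ℝ) : ℝ :=
  sinh x * (8 * cosh x - 6) + 2 * x * (2 * cosh x ^ 2 - 2 * cosh x - 1)

theorem hasDerivAt_tanhCoshGap (x : ℝ) : HasDerivAt tanhCoshGap (tanhCoshGap' x) x := by
  have hs := hasDerivAt_sinh x
  have hc := hasDerivAt_cosh x
  have h := ((hs.mul ((hasDerivAt_const x 2).add hc)).add ((hasDerivAt_id x).mul (hc.pow 2))).sub
    (((hasDerivAt_id x).mul hc).const_mul 4)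
  refine h.congr_deriv ?_
  simp only [tanhCoshGap', Pi.add_apply, Pi.pow_apply, id_eq, Nat.cast_ofNat]
  linear_combination sinh_sq x

theorem hasDerivAt_tanhCoshGap' (x : ℝ) : HasDerivAt tanhCoshGap' (tanhCoshGap'' x) x := by
  have hs := hasDerivAt_sinh x
  have hc := hasDerivAt_cosh x
  have h := ((((hc.pow 2).const_mul 3).sub (hasDerivAt_const x 1)).sub (hc.const_mul 2)).add
    ((((hasDerivAt_id x).const_mul 2).mul hs).mul (hc.sub (hasDerivAt_const x 2)))
  refine h.congr_deriv ?_
  simp only [tanhCoshGap'', Pi.sub_apply, Pi.mul_apply, id_eq, Nat.cast_ofNat]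
  linear_combination (2 * x) * sinh_sq x

theorem hasDerivAt_tanhCoshGap'' (x : ℝ) :
    HasDerivAt tanhCoshGap''
      (10 * (2 * cosh x + 1) * (cosh x - 1) + 2 * x * sinh x * (4 * cosh x - 2)) x := by
  have hs := hasDerivAt_sinh x
  have hc := hasDerivAt_cosh x
  have h := (hs.mul ((hc.const_mul 8).sub (hasDerivAt_const x 6))).add
    (((hasDerivAt_id x).const_mul 2).mul
      ((((hc.pow 2).const_mul 2).sub (hc.const_mul 2)).sub (hasDerivAt_const x 1)))
  refine h.congr_deriv ?_
  simp only [Pi.sub_apply, Pi.pow_apply, id_eq, Nat.cast_ofNat]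
  linear_combination 8 * sinh_sq x

theorem tanhCoshGap''_nonneg {x : ℝ} (hx : 0 ≤ x) : 0 ≤ tanhCoshGap'' x := by
  refine nonneg_of_hasDerivAt_nonneg (fun y _ => hasDerivAt_tanhCoshGap'' y) (fun y hy => ?_)
    (by simp [tanhCoshGap'']) hx
  have hc := one_le_cosh y
  have hs : 0 ≤ sinh y := sinh_nonneg_iff.mpr hy
  have h₁ : 0 ≤ 10 * (2 * cosh y + 1) * (cosh y - 1) :=
    mul_nonneg (by positivity) (by linarith)
  have h₂ : 0 ≤ 2 * y * sinh y * (4 * cosh y - 2) :=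
    mul_nonneg (by positivity) (by linarith)
  linarith

theorem tanhCoshGap'_nonneg {x : ℝ} (hx : 0 ≤ x) : 0 ≤ tanhCoshGap' x :=
  nonneg_of_hasDerivAt_nonneg (fun y _ => hasDerivAt_tanhCoshGap' y)
    (fun _ hy => tanhCoshGap''_nonneg hy) (by norm_num [tanhCoshGap']) hx

theorem tanhCoshGap_nonneg {x : ℝ} (hx : 0 ≤ x) : 0 ≤ tanhCoshGap x :=
  nonneg_of_hasDerivAt_nonneg (fun y _ => hasDerivAt_tanhCoshGap y)
    (fun _ hy => tanhCoshGap'_nonneg hy) (by simp [tanhCoshGap]) hx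

theorem two_le_tanh_div_add_of_pos {x : ℝ} (hx : 0 < x) :
    2 ≤ tanh x / x + 3 * cosh x / (2 + cosh x) := by
  have hc := cosh_pos x
  have hgap := tanhCoshGap_nonneg hx.le
  rw [tanhCoshGap] at hgap
  rw [tanh_eq_sinh_div_cosh, div_div, div_add_div _ _ (by positivity) (by positivity),
    le_div_iff₀ (by positivity)]
  nlinarith

theorem tanh_cosh_inequality (x : ℝ) (hx : x ≠ 0) :
    Real.tanh x / x + 3 * Real.cosh x / (2 + Real.cosh x) ≥ 2 := by
  rcases hx.lt_or_gt with hneg | hpos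
  · simpa [tanh_neg, cosh_neg, neg_div_neg_eq] using two_le_tanh_div_add_of_pos (neg_pos.2 hneg)
  · exact two_le_tanh_div_add_of_pos hpos
end

section
/- Let (aₙ) and (bₙ) be real sequences with bₙ > 0 for all n, and suppose both power series A(x) = Σ aₙxⁿ and B(x) = Σ bₙxⁿ converge for |x| < R. If the sequence aₙ/bₙ is strictly increasing, then x ↦ A(x)/B(x) is strictly increasing on (0, R). -/
/-!
Clearing the positive denominators, it suffices to show `A(x) B(y) - A(y) B(x) < 0` for
`0 < x < y < R`. Expanding the products as absolutely convergent double series and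
symmetrizing in the two indices gives
`2 (A(x) B(y) - A(y) B(x)) = ∑_{m,n} (a_m b_n - a_n b_m) (x^m y^n - x^n y^m)`.
For `m ≤ n` the first factor is `≤ 0` because `a/b` increases and the second is `≥ 0` because
`x ≤ y`, so every term is nonpositive, and the term `(m, n) = (0, 1)` is strictly negative.
-/

open Filter Asymptotics

theorem summable_norm_mul_pow_of_norm_lt {𝕜 : Type*} [NormedField 𝕜] {a : ℕ → 𝕜} {r x : 𝕜}
    (hr : Summable fun n => a n * r ^ n) (hx : ‖x‖ < ‖r‖) :
    Summable fun n => ‖a n * x ^ n‖ := by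
  have hr0 : r ≠ 0 := norm_pos_iff.mp ((norm_nonneg x).trans_lt hx)
  have hq : ‖x / r‖ < 1 := by rwa [norm_div, div_lt_one ((norm_nonneg x).trans_lt hx)]
  refine summable_of_isBigO_nat (summable_geometric_of_lt_one (norm_nonneg _) hq) ?_
  have hbdd : (fun n => a n * r ^ n) =O[atTop] (fun _ => (1 : ℝ)) :=
    hr.tendsto_atTop_zero.isBigO_one ℝ
  have := (hbdd.mul (isBigO_refl (fun n => (x / r) ^ n) atTop).norm_right).norm_left
  refine this.congr (fun n => ?_) (fun n => ?_)
  · rw [div_pow, mul_assoc, mul_div_cancel₀ _ (pow_ne_zero n hr0)]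
  · rw [one_mul, norm_pow]

theorem summable_norm_mul_pow_of_abs_lt {a : ℕ → ℝ} {R x : ℝ}
    (ha : ∀ x : ℝ, |x| < R → Summable fun n => a n * x ^ n) (hx : |x| < R) :
    Summable fun n => ‖a n * x ^ n‖ := by
  obtain ⟨r, hxr, hrR⟩ := exists_between hx
  have hr : |r| = r := abs_of_pos ((abs_nonneg x).trans_lt hxr)
  exact summable_norm_mul_pow_of_norm_lt (ha r (hr.symm ▸ hrR)) (by simpa [hr] using hxr)

theorem hasSum_mul_of_summable_norm {R : Type*} [NormedRing R] [CompleteSpace R] {f g : ℕ → R}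
    (hf : Summable fun n => ‖f n‖) (hg : Summable fun n => ‖g n‖) :
    HasSum (fun p : ℕ × ℕ => f p.1 * g p.2) ((∑' n, f n) * ∑' n, g n) :=
  hf.of_norm.hasSum.mul hg.of_norm.hasSum (summable_mul_of_summable_norm hf hg)

theorem HasSum.add_swap {α M : Type*} [AddCommMonoid M] [TopologicalSpace M] [ContinuousAdd M]
    {F : α × α → M} {s : M} (h : HasSum F s) :
    HasSum (fun p => F p + F p.swap) (s + s) :=
  h.add ((Equiv.prodComm α α).hasSum_iff.mpr h)

theorem pow_mul_pow_le_pow_mul_pow_s18 {R : Type*} [CommSemiring R] [PartialOrder R]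
    [IsOrderedRing R] {x y : R} (hx : 0 ≤ x) (hxy : x ≤ y) {m n : ℕ} (hmn : m ≤ n) :
    x ^ n * y ^ m ≤ x ^ m * y ^ n := by
  obtain ⟨k, rfl⟩ := Nat.exists_eq_add_of_le hmn
  have hy : 0 ≤ y := hx.trans hxy
  calc x ^ (m + k) * y ^ m = x ^ m * y ^ m * x ^ k := by ring
    _ ≤ x ^ m * y ^ m * y ^ k := by gcongr
    _ = x ^ m * y ^ (m + k) := by ring

section CrossTerm

variable {R : Type*}

def crossTerm [CommRing R] (a b : ℕ → R) (x y : R) (p : ℕ × ℕ) : R :=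
  (a p.1 * b p.2 - a p.2 * b p.1) * (x ^ p.1 * y ^ p.2 - x ^ p.2 * y ^ p.1)

theorem crossTerm_swap [CommRing R] (a b : ℕ → R) (x y : R) (p : ℕ × ℕ) :
    crossTerm a b x y p.swap = crossTerm a b x y p := by
  simp only [crossTerm, Prod.fst_swap, Prod.snd_swap]
  ring

theorem hasSum_crossTerm [NormedCommRing R] [CompleteSpace R] {a b : ℕ → R} {x y : R}
    (hax : Summable fun n => ‖a n * x ^ n‖) (hay : Summable fun n => ‖a n * y ^ n‖)
    (hbx : Summable fun n => ‖b n * x ^ n‖) (hby : Summable fun n => ‖b n * y ^ n‖) :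
    HasSum (crossTerm a b x y) (2 * ((∑' n, a n * x ^ n) * (∑' n, b n * y ^ n)
      - (∑' n, a n * y ^ n) * (∑' n, b n * x ^ n))) := by
  have h := ((hasSum_mul_of_summable_norm hax hby).sub
    (hasSum_mul_of_summable_norm hay hbx)).add_swap
  rw [← two_mul] at h
  refine (congrArg (HasSum · _) (funext fun p => ?_)).mpr h
  simp only [crossTerm, Prod.fst_swap, Prod.snd_swap]
  ring

theorem crossTerm_nonpos {a b : ℕ → ℝ} (hb : ∀ n, 0 < b n) (hab : Monotone fun n => a n / b n)
    {x y : ℝ} (hx : 0 ≤ x) (hxy : x ≤ y) (p : ℕ × ℕ) : crossTerm a b x y p ≤ 0 := by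
  obtain ⟨m, n⟩ := p
  wlog hmn : m ≤ n generalizing m n
  · rw [← crossTerm_swap]
    exact this n m (le_of_not_ge hmn)
  refine mul_nonpos_of_nonpos_of_nonneg (sub_nonpos.mpr ?_) (sub_nonneg.mpr ?_)
  · exact (div_le_div_iff₀ (hb m) (hb n)).mp (hab hmn)
  · exact pow_mul_pow_le_pow_mul_pow_s18 hx hxy hmn

theorem crossTerm_zero_one_neg {a b : ℕ → ℝ} (hb : ∀ n, 0 < b n)
    (hab : a 0 / b 0 < a 1 / b 1) {x y : ℝ} (hxy : x < y) : crossTerm a b x y (0, 1) < 0 := by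
  have h := (div_lt_div_iff₀ (hb 0) (hb 1)).mp hab
  exact mul_neg_of_neg_of_pos (by linarith) (by simpa using hxy)

end CrossTerm

theorem ponnusamy_vuorinen (a b : ℕ → ℝ) (R : ℝ)
    (hb : ∀ n, 0 < b n)
    (hA : ∀ x : ℝ, |x| < R → Summable fun n => a n * x^n)
    (hB : ∀ x : ℝ, |x| < R → Summable fun n => b n * x^n)
    (hmono : StrictMono fun n => a n / b n) :
    StrictMonoOn (fun x : ℝ => (∑' n, a n * x^n) / (∑' n, b n * x^n)) (Set.Ioo 0 R) := by
  rintro x ⟨hx0, hxR⟩ y ⟨hy0, hyR⟩ hxy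
  have hxR' : |x| < R := by rwa [abs_of_pos hx0]
  have hyR' : |y| < R := by rwa [abs_of_pos hy0]
  have hB_pos : ∀ z, 0 < z → |z| < R → 0 < ∑' n, b n * z ^ n := fun z hz hzR =>
    (hB z hzR).tsum_pos (fun n => (mul_pos (hb n) (pow_pos hz n)).le) 0 (by simpa using hb 0)
  have hsum := hasSum_crossTerm (summable_norm_mul_pow_of_abs_lt hA hxR')
    (summable_norm_mul_pow_of_abs_lt hA hyR') (summable_norm_mul_pow_of_abs_lt hB hxR')
    (summable_norm_mul_pow_of_abs_lt hB hyR')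
  have hneg := hasSum_lt (crossTerm_nonpos hb hmono.monotone hx0.le hxy.le)
    (crossTerm_zero_one_neg hb (hmono zero_lt_one) hxy) hsum hasSum_zero
  rw [div_lt_div_iff₀ (hB_pos x hx0 hxR') (hB_pos y hy0 hyR')]
  linarith
end
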